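/- arXiv:2502.15146 — 3 statements merged into one kernel-verified Lean document; each statement's English description precedes it below -/
import Mathlib

section
/- Let (D, d) be a pseudometric space where d is conditionally negative definite, and suppose Chebyshev centers exist for all nonempty bounded sets. Then the ball-Hausdorff distance bh(A₁, A₂) = d(c(A₁), c(A₂)) + |R(A₁) − R(A₂)| is conditionally negative definite on the class of nonempty bounded sets of D. -/
/-- A function `g : D × D → ℝ` is conditionally negative definite. -/
def IsCND {D : Type*} (g : D → D → ℝ) : Prop :=
  ∀ (m : ℕ) (s : Fin m → D) (b : Fin m → ℝ), (∑ i, b i = 0) →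
    ∑ i, ∑ j, b i * b j * g (s i) (s j) ≤ 0

/-- The radius of the smallest open ball centered at `x` containing `A`. -/
noncomputable def coverRad {D : Type*} [PseudoMetricSpace D] (x : D) (A : Set D) : ℝ :=
  sInf {r : ℝ | 0 ≤ r ∧ A ⊆ Metric.ball x r}

/-- The Chebyshev radius of `A`. -/
noncomputable def chebRad {D : Type*} [PseudoMetricSpace D] (A : Set D) : ℝ :=
  sInf {r : ℝ | ∃ x : D, 0 ≤ r ∧ A ⊆ Metric.ball x r}

/-- `x` is a Chebyshev center of `A` if it attains the Chebyshev radius. -/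
def IsChebCenter {D : Type*} [PseudoMetricSpace D] (x : D) (A : Set D) : Prop :=
  coverRad x A = chebRad A

/-!
Conditionally negative definite kernels are closed under sums, under pullback along any map and
under integration in a parameter. On `ℝ`, the quadratic form of `(x - y) ^ 2` equals
`-2 (∑ i, b i * x i) ^ 2` once `∑ i, b i = 0`, and integrating `(𝟙[t < x] - 𝟙[t < y]) ^ 2` over
`t` gives `|x - y|`, so `|x - y|` is CND too. The ball-Hausdorff distance is the sum of the
pullbacks of `dist` along the center map and of `|x - y|` along the Chebyshev radius.
-/

open MeasureTheory Finset

theorem IsCND.comp {D E : Type*} {g : D → D → ℝ} (hg : IsCND g) (f : E → D) :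
    IsCND (fun x y => g (f x) (f y)) :=
  fun m s => hg m (f ∘ s)

theorem IsCND.add {D : Type*} {g h : D → D → ℝ} (hg : IsCND g) (hh : IsCND h) :
    IsCND (fun x y => g x y + h x y) := by
  intro m s b hb
  simp only [mul_add, sum_add_distrib]
  exact add_nonpos (hg m s b hb) (hh m s b hb)

theorem IsCND.integral {D T : Type*} [MeasurableSpace T] {μ : Measure T} {g : T → D → D → ℝ}
    (hg : ∀ t, IsCND (g t)) (hint : ∀ x y, Integrable (fun t => g t x y) μ) :
    IsCND (fun x y => ∫ t, g t x y ∂μ) := by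
  intro m s b hb
  have hint' : ∀ i j, Integrable (fun t => b i * b j * g t (s i) (s j)) μ :=
    fun i j => (hint _ _).const_mul _
  calc ∑ i, ∑ j, b i * b j * ∫ t, g t (s i) (s j) ∂μ
      = ∫ t, ∑ i, ∑ j, b i * b j * g t (s i) (s j) ∂μ := by
        rw [integral_finsetSum _ fun i _ => integrable_finsetSum _ fun j _ => hint' i j]
        refine sum_congr rfl fun i _ => ?_
        rw [integral_finsetSum _ fun j _ => hint' i j]
        simp only [integral_const_mul]
    _ ≤ 0 := integral_nonpos fun t => hg t m s b hb

theorem isCND_sq_sub : IsCND (fun x y : ℝ => (x - y) ^ 2) := by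
  intro m x b hb
  have hexpand : ∑ i, ∑ j, b i * b j * (x i - x j) ^ 2
      = 2 * (∑ i, b i) * ∑ i, b i * x i ^ 2 - 2 * (∑ i, b i * x i) ^ 2 := by
    have hterm : ∀ i j, b i * b j * (x i - x j) ^ 2
        = b i * x i ^ 2 * b j + b i * (b j * x j ^ 2) - 2 * (b i * x i) * (b j * x j) :=
      fun i j => by ring
    simp only [hterm, sum_add_distrib, sum_sub_distrib, ← mul_sum, ← sum_mul]
    ring
  rw [hexpand, hb]
  nlinarith [sq_nonneg (∑ i, b i * x i)]

theorem sq_indicator_Iio_sub_indicator_Iio (x y t : ℝ) :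
    ((Set.Iio x).indicator 1 t - (Set.Iio y).indicator 1 t) ^ 2
      = (Set.Ico (min x y) (max x y)).indicator (1 : ℝ → ℝ) t := by
  rcases le_total x y with h | h <;> by_cases hx : t < x <;> by_cases hy : t < y <;>
    simp [Set.indicator_apply, hx, hy, h]
  all_goals linarith

theorem isCND_abs_sub : IsCND (fun x y : ℝ => |x - y|) := by
  have key : ∀ x y : ℝ,
      |x - y| = ∫ t, ((Set.Iio x).indicator 1 t - (Set.Iio y).indicator 1 t) ^ 2 := by
    intro x y
    simp only [sq_indicator_Iio_sub_indicator_Iio]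
    rw [integral_indicator_one measurableSet_Ico, Real.volume_real_Ico_of_le min_le_max,
      max_sub_min_eq_abs']
  simp only [key]
  refine IsCND.integral (fun t => isCND_sq_sub.comp _) fun x y => ?_
  simp only [sq_indicator_Iio_sub_indicator_Iio]
  exact (integrable_indicator_iff measurableSet_Ico).2 (integrableOn_const measure_Ico_lt_top.ne)

theorem bh_cnd_general {D : Type*} [PseudoMetricSpace D]
    (hd : IsCND (fun s t : D => dist s t))
    (c : Set D → D) :
    IsCND (fun A₁ A₂ : {A : Set D // A.Nonempty ∧ Bornology.IsBounded A} =>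
      dist (c A₁.1) (c A₂.1) + |chebRad A₁.1 - chebRad A₂.1|) :=
  (hd.comp (c ∘ Subtype.val)).add (isCND_abs_sub.comp (chebRad ∘ Subtype.val))

/-- If the pseudometric `d` is CND and Chebyshev centers exist for all nonempty
bounded sets, then the ball-Hausdorff distance
`bh(A₁, A₂) = d(c(A₁), c(A₂)) + |R(A₁) − R(A₂)|` is CND on the class of
nonempty bounded subsets of `D`. -/
theorem bh_cnd {D : Type*} [PseudoMetricSpace D]
    (hd : IsCND (fun s t : D => dist s t))
    (c : Set D → D)
    (hc : ∀ A : Set D, A.Nonempty → Bornology.IsBounded A → IsChebCenter (c A) A) :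
    IsCND (fun A₁ A₂ : {A : Set D // A.Nonempty ∧ Bornology.IsBounded A} =>
      dist (c A₁.1) (c A₂.1) + |chebRad A₁.1 - chebRad A₂.1|) :=
  bh_cnd_general hd c
end

section
/- If d is a conditionally negative definite pseudometric on D with d(s, s) = 0 for all s, then for any κ > 0 the kernel k(s, t) = exp(−κ d(s, t)) is positive semidefinite: for all s₁, …, s_m ∈ D and real a₁, …, a_m, ∑ᵢ∑ⱼ aᵢaⱼ exp(−κ d(sᵢ, sⱼ)) ≥ 0. -/
/-!
Fix a base point `z = s₀`. Conditional negative definiteness of `d`, applied to the points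
`z, s₁, …, sₘ` with weights `-∑ xᵢ, x₁, …, xₘ`, says exactly that the kernel
`K(s, t) = d(s, z) + d(t, z) - d(s, t)` is positive semidefinite. By the Schur product theorem,
entrywise powers of a positive semidefinite matrix are positive semidefinite, hence so is the
entrywise exponential (a limit of nonnegative combinations of them). Finally
`exp(-κ d(s, t)) = exp(κ K(s, t)) · g(s) g(t)` with `g(s) = exp(-κ d(s, z))`, a Hadamard product
with the rank-one matrix `g gᵀ`.
-/

open Matrix Finset

theorem Matrix.dotProduct_mulVec_eq_sum_sum {ι R : Type*} [Fintype ι] [CommSemiring R]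
    (M : Matrix ι ι R) (x y : ι → R) : x ⬝ᵥ M *ᵥ y = ∑ i, ∑ j, x i * y j * M i j := by
  simp only [dotProduct, mulVec, mul_sum]
  exact sum_congr rfl fun i _ => sum_congr rfl fun j _ => by ring

namespace Matrix.PosSemidef

variable {ι : Type*} [Fintype ι] {M : Matrix ι ι ℝ}

theorem sum_mul_mul_nonneg (hM : M.PosSemidef) (x : ι → ℝ) :
    0 ≤ ∑ i, ∑ j, x i * x j * M i j := by
  simpa [dotProduct_mulVec_eq_sum_sum] using hM.dotProduct_mulVec_nonneg x

theorem of_sum_mul_mul_nonneg (hM : M.IsHermitian)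
    (h : ∀ x : ι → ℝ, 0 ≤ ∑ i, ∑ j, x i * x j * M i j) : M.PosSemidef :=
  of_dotProduct_mulVec_nonneg hM fun x => by simpa [dotProduct_mulVec_eq_sum_sum] using h x

theorem map_pow (hM : M.PosSemidef) (n : ℕ) : (M.map (· ^ n)).PosSemidef := by
  induction n with
  | zero =>
    convert posSemidef_vecMulVec_self_star (1 : ι → ℝ) using 1
    ext; simp
  | succ n ih =>
    have h : M.map (· ^ (n + 1)) = M.map (· ^ n) ⊙ M := by ext; simp [pow_succ]
    exact h ▸ ih.hadamard hM

theorem map_exp (hM : M.PosSemidef) : (M.map Real.exp).PosSemidef := by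
  have hsum : HasSum (fun n : ℕ => (n.factorial⁻¹ : ℝ) • M.map (· ^ n)) (M.map Real.exp) :=
    Pi.hasSum.2 fun i => Pi.hasSum.2 fun j => by
      simpa [Real.exp_eq_exp_ℝ, div_eq_inv_mul] using NormedSpace.expSeries_div_hasSum_exp (M i j)
  refine of_dotProduct_mulVec_nonneg (hM.isHermitian.map _ fun _ => rfl) fun x => ?_
  let q : Matrix ι ι ℝ →+ ℝ :=
    { toFun := fun A => star x ⬝ᵥ A *ᵥ x
      map_zero' := by simp
      map_add' := fun A B => by simp [add_mulVec, dotProduct_add] }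
  have hq : Continuous q :=
    continuous_const.dotProduct (continuous_id.matrix_mulVec continuous_const)
  exact (hsum.map q hq).nonneg fun n =>
    ((hM.map_pow n).smul (by positivity)).dotProduct_mulVec_nonneg x

end Matrix.PosSemidef

def ConditionallyNegativeDefinite {D : Type*} (d : D → D → ℝ) : Prop :=
  ∀ (m : ℕ) (s : Fin m → D) (b : Fin m → ℝ), (∑ i, b i = 0) →
    ∑ i, ∑ j, b i * b j * d (s i) (s j) ≤ 0

/-- The kernel `d x z + d y z - d x y` is twice the Gromov product `(x | y)_z`. -/
theorem ConditionallyNegativeDefinite.posSemidef_gromov {D : Type*} {d : D → D → ℝ}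
    (hd : ConditionallyNegativeDefinite d) (hsymm : ∀ x y, d x y = d y x) (hdiag : ∀ x, d x x = 0)
    (z : D) {m : ℕ} (s : Fin m → D) :
    (of fun i j => d (s i) z + d (s j) z - d (s i) (s j)).PosSemidef := by
  refine .of_sum_mul_mul_nonneg (by ext i j; simp [hsymm (s i) (s j)]; ring) fun x => ?_
  set S := ∑ i, x i
  set T := ∑ i, x i * d (s i) z
  have hb : ∑ i, (Fin.cons (-S) x : Fin (m + 1) → ℝ) i = 0 := by simp [S, Fin.sum_univ_succ]
  have hcnd := hd (m + 1) (Fin.cons z s) _ hb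
  simp only [Fin.sum_univ_succ, Fin.cons_zero, Fin.cons_succ, hdiag, mul_zero, zero_add,
    sum_add_distrib] at hcnd
  have hT : ∀ c : ℝ, ∑ i, x i * c * d (s i) z = c * T := fun c => by
    rw [mul_sum]; exact sum_congr rfl fun _ _ => by ring
  have hT' : ∑ j, -S * x j * d z (s j) = -S * T := by
    rw [mul_sum]; exact sum_congr rfl fun _ _ => by rw [hsymm]; ring
  have hST : ∑ i, ∑ j, x i * x j * d (s j) z = S * T := by
    rw [sum_mul_sum]; exact sum_congr rfl fun _ _ => sum_congr rfl fun _ _ => by ring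
  have hTS : ∑ i, ∑ j, x i * x j * d (s i) z = S * T := by
    rw [sum_comm, ← hST]; exact sum_congr rfl fun _ _ => sum_congr rfl fun _ _ => by ring
  simp only [of_apply, mul_sub, mul_add, sum_add_distrib, sum_sub_distrib, hST, hTS]
  rw [hT, hT'] at hcnd
  linarith

theorem exp_neg_cnd_psd_general {D : Type*} (d : D → D → ℝ)
    (hsymm : ∀ s t, d s t = d t s)
    (hdiag : ∀ s, d s s = 0)
    (hcnd : ∀ (m : ℕ) (s : Fin m → D) (b : Fin m → ℝ), (∑ i, b i = 0) →
      ∑ i, ∑ j, b i * b j * d (s i) (s j) ≤ 0)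
    (κ : ℝ) (hκ : 0 < κ) :
    ∀ (m : ℕ) (s : Fin m → D) (a : Fin m → ℝ),
      0 ≤ ∑ i, ∑ j, a i * a j * Real.exp (-κ * d (s i) (s j)) := by
  rintro (_ | m) s a
  · simp
  set g : Fin (m + 1) → ℝ := fun i => Real.exp (-κ * d (s i) (s 0))
  have hK := ConditionallyNegativeDefinite.posSemidef_gromov hcnd hsymm hdiag (s 0) s
  have hE := ((hK.smul hκ.le).map_exp).hadamard (posSemidef_vecMulVec_self_star g)
  refine (hE.sum_mul_mul_nonneg a).trans_eq (sum_congr rfl fun i _ => sum_congr rfl fun j _ => ?_)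
  simp only [hadamard_apply, map_apply, Matrix.smul_apply, of_apply, vecMulVec_apply, g,
    star_trivial, smul_eq_mul, ← Real.exp_add]
  ring_nf

/-- Schoenberg: if `d` is a CND pseudometric (symmetric, vanishing on the
diagonal, nonnegative), then `exp(−κ d(s,t))` is positive semidefinite for
every `κ > 0`. -/
theorem exp_neg_cnd_psd {D : Type*} (d : D → D → ℝ)
    (hnonneg : ∀ s t, 0 ≤ d s t)
    (hsymm : ∀ s t, d s t = d t s)
    (hdiag : ∀ s, d s s = 0)
    (hcnd : ∀ (m : ℕ) (s : Fin m → D) (b : Fin m → ℝ), (∑ i, b i = 0) →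
      ∑ i, ∑ j, b i * b j * d (s i) (s j) ≤ 0)
    (κ : ℝ) (hκ : 0 < κ) :
    ∀ (m : ℕ) (s : Fin m → D) (a : Fin m → ℝ),
      0 ≤ ∑ i, ∑ j, a i * a j * Real.exp (-κ * d (s i) (s j)) :=
  exp_neg_cnd_psd_general d hsymm hdiag hcnd κ hκ
end

section
/- If d is a conditionally negative definite pseudometric on D (symmetric, vanishing on the diagonal), then for any ν ∈ (0, 1], the function d^ν is also conditionally negative definite. -/
/-!
For `0 < ν < 1` Mathlib's Stieltjes representation gives
`x ^ ν = C⁻¹ * ∫ t in Ioi 0, t ^ ν * (t⁻¹ - (t + x)⁻¹)` with `C > 0`, and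
`(t + x)⁻¹ = ∫ u in Ioi 0, exp (-u t) * exp (-u x)`. By Schoenberg's theorem `exp (-u d)` is a
positive semidefinite kernel when `d` is conditionally negative definite, so `-(t + d)⁻¹` and then
`t ^ ν * (t⁻¹ - (t + d)⁻¹)` are conditionally negative definite; this property survives
nonnegative mixtures, hence passes to `d ^ ν`.
-/

open MeasureTheory Set Matrix
open scoped ComplexOrder

namespace Matrix

variable {ι : Type*} [Fintype ι]

lemma star_dotProduct_mulVec_eq_sum (A : Matrix ι ι ℝ) (x : ι → ℝ) :
    star x ⬝ᵥ (A *ᵥ x) = ∑ i, ∑ j, x i * x j * A i j := by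
  simp only [dotProduct, mulVec, star_trivial, Finset.mul_sum]
  exact Finset.sum_congr rfl fun i _ => Finset.sum_congr rfl fun j _ => by ring

lemma PosSemidef.sum_mul_mul_nonneg_s8 {A : Matrix ι ι ℝ} (hA : A.PosSemidef) (x : ι → ℝ) :
    0 ≤ ∑ i, ∑ j, x i * x j * A i j :=
  star_dotProduct_mulVec_eq_sum A x ▸ hA.dotProduct_mulVec_nonneg x

lemma PosSemidef.map_pow_s8 {𝕜 : Type*} [RCLike 𝕜] {A : Matrix ι ι 𝕜} (hA : A.PosSemidef)
    (n : ℕ) : (A.map (· ^ n)).PosSemidef := by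
  induction n with
  | zero =>
    convert posSemidef_vecMulVec_self_star (1 : ι → 𝕜) using 1
    ext; simp [vecMulVec]
  | succ n ih =>
    convert ih.hadamard hA using 1
    ext; simp [pow_succ]

lemma PosSemidef.map_exp_s8 {A : Matrix ι ι ℝ} (hA : A.PosSemidef) :
    (A.map Real.exp).PosSemidef := by
  refine .of_dotProduct_mulVec_nonneg (hA.isHermitian.map _ fun _ => rfl) fun x => ?_
  have hsum : HasSum (fun n => (∑ i, ∑ j, x i * x j * A i j ^ n) / n.factorial)
      (star x ⬝ᵥ (A.map Real.exp *ᵥ x)) := by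
    simp_rw [star_dotProduct_mulVec_eq_sum, Finset.sum_div, mul_div_assoc]
    refine hasSum_sum fun i _ => hasSum_sum fun j _ => .mul_left _ ?_
    simpa [Real.exp_eq_exp_ℝ] using NormedSpace.expSeries_div_hasSum_exp (A i j)
  exact hsum.nonneg fun n => div_nonneg ((hA.map_pow_s8 n).sum_mul_mul_nonneg_s8 x) (by positivity)

end Matrix

def IsCondNegDef {D : Type*} (d : D → D → ℝ) : Prop :=
  ∀ (m : ℕ) (s : Fin m → D) (b : Fin m → ℝ), ∑ i, b i = 0 →
    ∑ i, ∑ j, b i * b j * d (s i) (s j) ≤ 0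

namespace IsCondNegDef

variable {D : Type*} {d : D → D → ℝ}

lemma const_mul (h : IsCondNegDef d) {c : ℝ} (hc : 0 ≤ c) :
    IsCondNegDef fun x y => c * d x y := by
  intro m s b hb
  have hsum : ∑ i, ∑ j, b i * b j * (c * d (s i) (s j))
      = c * ∑ i, ∑ j, b i * b j * d (s i) (s j) := by
    simp_rw [Finset.mul_sum]
    exact Finset.sum_congr rfl fun i _ => Finset.sum_congr rfl fun j _ => by ring
  rw [hsum]
  exact mul_nonpos_of_nonneg_of_nonpos hc (h m s b hb)

lemma const_add (h : IsCondNegDef d) (c : ℝ) : IsCondNegDef fun x y => c + d x y := by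
  intro m s b hb
  have hconst : ∑ i, ∑ j, b i * b j * c = 0 := by
    simp [← Finset.sum_mul, ← Finset.mul_sum, hb]
  simpa only [mul_add, Finset.sum_add_distrib, hconst, zero_add] using h m s b hb

lemma integral {T : Type*} [MeasurableSpace T] {μ : Measure T} {k : T → D → D → ℝ}
    (hk : ∀ᵐ t ∂μ, IsCondNegDef (k t)) (hint : ∀ x y, Integrable (k · x y) μ) :
    IsCondNegDef fun x y => ∫ t, k t x y ∂μ := by
  intro m s b hb
  have hsum : ∑ i, ∑ j, b i * b j * ∫ t, k t (s i) (s j) ∂μ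
      = ∫ t, ∑ i, ∑ j, b i * b j * k t (s i) (s j) ∂μ := by
    rw [integral_finsetSum _ fun i _ => integrable_finsetSum _ fun j _ =>
      (hint _ _).const_mul _]
    simp_rw [← integral_const_mul]
    exact Finset.sum_congr rfl fun i _ => (integral_finsetSum _ fun j _ =>
      (hint _ _).const_mul _).symm
  rw [hsum]
  exact integral_nonpos_of_ae (hk.mono fun t ht => ht m s b hb)

lemma neg_of_posSemidef {k : D → D → ℝ}
    (hk : ∀ (m : ℕ) (s : Fin m → D), (Matrix.of fun i j => k (s i) (s j)).PosSemidef) :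
    IsCondNegDef fun x y => -k x y := by
  intro m s b _
  simpa using (hk m s).sum_mul_mul_nonneg_s8 b

/-- The entries are twice the Gromov products `(sᵢ | sⱼ)_{x₀}`. -/
lemma posSemidef_gromov (h : IsCondNegDef d) (hsymm : ∀ x y, d x y = d y x)
    (hdiag : ∀ x, d x x = 0) {m : ℕ} (s : Fin m → D) (x₀ : D) :
    (Matrix.of fun i j => d (s i) x₀ + d (s j) x₀ - d (s i) (s j)).PosSemidef := by
  refine .of_dotProduct_mulVec_nonneg ?_ fun c => ?_
  · ext i j
    simp only [conjTranspose_apply, of_apply, star_trivial, hsymm (s j) (s i)]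
    ring
  rw [star_dotProduct_mulVec_eq_sum]
  -- Adjoin `x₀` with weight `-∑ c` so that the weights sum to zero.
  have hcons := h (m + 1) (Fin.cons x₀ s) (Fin.cons (-∑ i, c i) c) (by simp)
  simp only [Fin.sum_univ_succ, Fin.cons_zero, Fin.cons_succ, hdiag, hsymm x₀, mul_zero, zero_add,
    Finset.sum_add_distrib, mul_comm (c _) (-_)] at hcons
  simp only [mul_assoc, ← Finset.mul_sum] at hcons
  have hsplit : ∀ i j, c i * c j * (d (s i) x₀ + d (s j) x₀ - d (s i) (s j))
      = c i * d (s i) x₀ * c j + c i * (c j * d (s j) x₀) - c i * (c j * d (s i) (s j)) :=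
    fun i j => by ring
  simp only [of_apply, hsplit, Finset.sum_sub_distrib, Finset.sum_add_distrib,
    ← Finset.sum_mul_sum]
  simp only [← Finset.mul_sum] at hcons ⊢
  linarith

/-- Schoenberg: with `e i = exp (-u d(sᵢ, x₀))` the matrix is `diag e * exp (u • K) * diag e`,
where `K` is the Gromov matrix based at `x₀`. -/
lemma posSemidef_exp_neg_mul (h : IsCondNegDef d) (hsymm : ∀ x y, d x y = d y x)
    (hdiag : ∀ x, d x x = 0) {u : ℝ} (hu : 0 ≤ u) {m : ℕ} (s : Fin m → D) :
    (Matrix.of fun i j => Real.exp (-(u * d (s i) (s j)))).PosSemidef := by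
  rcases isEmpty_or_nonempty (Fin m) with _ | ⟨⟨i₀⟩⟩
  · convert PosSemidef.zero
    exact Subsingleton.elim _ _
  set e : Fin m → ℝ := fun i => Real.exp (-(u * d (s i) (s i₀)))
  have hexp := ((h.posSemidef_gromov hsymm hdiag s (s i₀)).smul hu).map_exp_s8
  convert hexp.conjTranspose_mul_mul_same (diagonal e) using 1
  ext i j
  simp only [of_apply, diagonal_conjTranspose, diagonal_mul, mul_diagonal, map_apply,
    Matrix.smul_apply, smul_eq_mul, star_trivial, e, ← Real.exp_add]
  ring_nf

/-- `(t + x)⁻¹ = ∫ u in Ioi 0, exp (-u t) * exp (-u x)` is a mixture of the kernels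
`exp (-u d)`, which are positive semidefinite by Schoenberg's theorem. -/
lemma neg_inv_const_add (h : IsCondNegDef d) (hsymm : ∀ x y, d x y = d y x)
    (hdiag : ∀ x, d x x = 0) (hnonneg : ∀ x y, 0 ≤ d x y) {t : ℝ} (ht : 0 < t) :
    IsCondNegDef fun x y => -(t + d x y)⁻¹ := by
  have hpos : ∀ x y, -(t + d x y) < 0 := fun x y => by linarith [hnonneg x y]
  have hfactor : ∀ u x y, -Real.exp (-(t + d x y) * u)
      = Real.exp (-(u * t)) * -Real.exp (-(u * d x y)) := fun u x y => by
    rw [mul_neg, ← Real.exp_add]; ring_nf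
  have hmix := IsCondNegDef.integral (μ := volume.restrict (Ioi 0))
    (k := fun u x y => -Real.exp (-(t + d x y) * u))
    (ae_restrict_of_forall_mem measurableSet_Ioi fun u hu => by
      simpa only [hfactor] using (neg_of_posSemidef fun m s =>
        h.posSemidef_exp_neg_mul hsymm hdiag (le_of_lt hu) s).const_mul (Real.exp_pos _).le)
    (fun x y => (integrableOn_exp_mul_Ioi (hpos x y) 0).neg)
  convert hmix using 3 with x y
  rw [integral_neg, integral_exp_mul_Ioi (hpos x y), mul_zero, Real.exp_zero, neg_div_neg_eq,
    one_div]

lemma rpowIntegrand₀₁ (h : IsCondNegDef d) (hsymm : ∀ x y, d x y = d y x)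
    (hdiag : ∀ x, d x x = 0) (hnonneg : ∀ x y, 0 ≤ d x y) (p : ℝ) {t : ℝ} (ht : 0 < t) :
    IsCondNegDef fun x y => Real.rpowIntegrand₀₁ p t (d x y) := by
  simpa only [Real.rpowIntegrand₀₁, sub_eq_add_neg] using
    ((h.neg_inv_const_add hsymm hdiag hnonneg ht).const_add t⁻¹).const_mul
      (Real.rpow_nonneg ht.le p)

end IsCondNegDef

/-- If `d` is a CND pseudometric (symmetric, vanishing on the diagonal,
nonnegative), then `d^ν` is CND for any `ν ∈ (0, 1]`. -/
theorem cnd_rpow {D : Type*} (d : D → D → ℝ)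
    (hnonneg : ∀ s t, 0 ≤ d s t)
    (hsymm : ∀ s t, d s t = d t s)
    (hdiag : ∀ s, d s s = 0)
    (hcnd : ∀ (m : ℕ) (s : Fin m → D) (b : Fin m → ℝ), (∑ i, b i = 0) →
      ∑ i, ∑ j, b i * b j * d (s i) (s j) ≤ 0)
    (ν : ℝ) (hν0 : 0 < ν) (hν1 : ν ≤ 1) :
    ∀ (m : ℕ) (s : Fin m → D) (b : Fin m → ℝ), (∑ i, b i = 0) →
      ∑ i, ∑ j, b i * b j * (d (s i) (s j)) ^ ν ≤ 0 := by
  have hd : IsCondNegDef d := hcnd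
  show IsCondNegDef fun x y => d x y ^ ν
  obtain rfl | hν1 := hν1.eq_or_lt
  · simpa only [Real.rpow_one] using hd
  have hν : ν ∈ Ioo 0 1 := ⟨hν0, hν1⟩
  have hmix : IsCondNegDef fun x y => ∫ t in Ioi 0, Real.rpowIntegrand₀₁ ν t (d x y) :=
    IsCondNegDef.integral
      (ae_restrict_of_forall_mem measurableSet_Ioi fun t ht =>
        hd.rpowIntegrand₀₁ hsymm hdiag hnonneg ν ht)
      fun x y => Real.integrableOn_rpowIntegrand₀₁_Ioi hν (hnonneg x y)
  simpa only [← Real.rpow_eq_const_mul_integral hν (hnonneg _ _)] using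
    hmix.const_mul (inv_nonneg.2 (Real.integral_rpowIntegrand₀₁_one_pos hν).le)
end
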